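/- arXiv:2005.05901 — 4 statements merged into one kernel-verified Lean document; each statement's English description precedes it below -/
import Mathlib

section
/- Let C be a category and p₁, p₂ plain rules in C. If a pair of AC-disregarding direct transformations tp : H₁ ⇐_(p₁,m₁) G ⇒_(p₂,m₂) H₂ is in use-delete conflict (i.e. there is no morphism d₁₂ : L₁ → D₂ with k₂ ∘ d₁₂ = m₁), then every pair of AC-disregarding direct transformations tp' : H₁' ⇐_(p₁,m₁') G' ⇒_(p₂,m₂') H₂' that is embedded into tp via an extension morphism f : G' → G is also in use-delete conflict (there is no d₁₂' : L₁ → D₂' with k₂' ∘ d₁₂' = m₁'). The symmetric statement holds for delete-use conflicts (nonexistence of d₂₁ with k₁ ∘ d₂₁ = m₂). -/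
open CategoryTheory CategoryTheory.Limits

universe v u

variable {C : Type u} [Category.{v} C]

/-- A plain rule: a span `L ⟵l I ⟶r R` with `l` and `r` monomorphisms. -/
structure PlainRule (C : Type u) [Category.{v} C] : Type (max u v) where
  L : C
  I : C
  R : C
  l : I ⟶ L
  r : I ⟶ R
  mono_l : Mono l
  mono_r : Mono r

/-- An AC-disregarding direct transformation `G ⇒_(p,m) H`: a double pushout with
context `D`, match `m` and comatch `cm`. -/
structure Trafo (p : PlainRule C) (G H : C) : Type (max u v) where
  m : p.L ⟶ G
  D : C
  f : p.I ⟶ D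
  k : D ⟶ G
  c : D ⟶ H
  cm : p.R ⟶ H
  po1 : IsPushout p.l f m k
  po2 : IsPushout p.r f cm c

/-- A pair of AC-disregarding transformations `H₁ ⇐_(p₁,m₁) G ⇒_(p₂,m₂) H₂`. -/
structure TrafoPair (p₁ p₂ : PlainRule C) : Type (max u v) where
  H₁ : C
  G : C
  H₂ : C
  t₁ : Trafo p₁ G H₁
  t₂ : Trafo p₂ G H₂

/-- An extension diagram embedding `t'` into `t` via extension morphism `ext`. -/
structure TrafoEmbedding {p : PlainRule C} {G' H' G H : C}
    (t' : Trafo p G' H') (t : Trafo p G H) (ext : G' ⟶ G) : Type (max u v) where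
  d : t'.D ⟶ t.D
  h : H' ⟶ H
  match_eq : t'.m ≫ ext = t.m
  f_eq : t'.f ≫ d = t.f
  po1 : IsPushout t'.k d ext t.k
  po2 : IsPushout t'.c d h t.c

/-- A transformation pair embedded into another via a common extension morphism. -/
structure PairEmbedding {p₁ p₂ : PlainRule C} (tp' tp : TrafoPair p₁ p₂)
    (ext : tp'.G ⟶ tp.G) : Type (max u v) where
  e₁ : TrafoEmbedding tp'.t₁ tp.t₁ ext
  e₂ : TrafoEmbedding tp'.t₂ tp.t₂ ext

/-- Parallel independence of a plain transformation pair. -/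
def TrafoPair.ParallelIndep {p₁ p₂ : PlainRule C} (tp : TrafoPair p₁ p₂) : Prop :=
  (∃ d₁₂ : p₁.L ⟶ tp.t₂.D, d₁₂ ≫ tp.t₂.k = tp.t₁.m) ∧
  (∃ d₂₁ : p₂.L ⟶ tp.t₁.D, d₂₁ ≫ tp.t₁.k = tp.t₂.m)

/-- Use-delete conflict: no commuting morphism `d₁₂ : L₁ ⟶ D₂` exists. -/
def TrafoPair.UseDelete {p₁ p₂ : PlainRule C} (tp : TrafoPair p₁ p₂) : Prop :=
  ¬ ∃ d₁₂ : p₁.L ⟶ tp.t₂.D, d₁₂ ≫ tp.t₂.k = tp.t₁.m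

/-- Delete-use conflict: no commuting morphism `d₂₁ : L₂ ⟶ D₁` exists. -/
def TrafoPair.DeleteUse {p₁ p₂ : PlainRule C} (tp : TrafoPair p₁ p₂) : Prop :=
  ¬ ∃ d₂₁ : p₂.L ⟶ tp.t₁.D, d₂₁ ≫ tp.t₁.k = tp.t₂.m

/-- A transformation pair is in conflict (parallel dependent) if it is not
parallel independent. -/
def TrafoPair.InConflict {p₁ p₂ : PlainRule C} (tp : TrafoPair p₁ p₂) : Prop :=
  ¬ tp.ParallelIndep

/-- `tpI` is an initial transformation pair for `tp`. -/
def IsInitialTrafoPairFor {p₁ p₂ : PlainRule C} (tpI tp : TrafoPair p₁ p₂) : Prop :=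
  ∃ fI : tpI.G ⟶ tp.G, Nonempty (PairEmbedding tpI tp fI) ∧
    ∀ (tp' : TrafoPair p₁ p₂) (f : tp'.G ⟶ tp.G), PairEmbedding tp' tp f →
      ∃! g : tpI.G ⟶ tp'.G, Nonempty (PairEmbedding tpI tp' g) ∧ g ≫ f = fI

/-- Two transformation pairs are isomorphic if each is embedded into the other via
an isomorphism as extension morphism. -/
def PairIso {p₁ p₂ : PlainRule C} (tp tp' : TrafoPair p₁ p₂) : Prop :=
  (∃ e : tp.G ⟶ tp'.G, IsIso e ∧ Nonempty (PairEmbedding tp tp' e)) ∧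
  (∃ e' : tp'.G ⟶ tp.G, IsIso e' ∧ Nonempty (PairEmbedding tp' tp e'))

/-- Use-delete (delete-use) conflict inheritance: if `tp` is in use-delete (resp.
delete-use) conflict and `tp'` is embedded into `tp` via an extension morphism,
then `tp'` is also in use-delete (resp. delete-use) conflict. -/
theorem useDelete_deleteUse_conflict_inheritance
    {C : Type u} [Category.{v} C] {p₁ p₂ : PlainRule C}
    (tp tp' : TrafoPair p₁ p₂) (f : tp'.G ⟶ tp.G) (emb : PairEmbedding tp' tp f) :
    (tp.UseDelete → tp'.UseDelete) ∧ (tp.DeleteUse → tp'.DeleteUse) := by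
  constructor
  · intro h ⟨d, hd⟩
    exact h ⟨d ≫ emb.e₂.d, by
      rw [Category.assoc, ← emb.e₂.po1.w, ← Category.assoc, hd, emb.e₁.match_eq]⟩
  · intro h ⟨d, hd⟩
    exact h ⟨d ≫ emb.e₁.d, by
      rw [Category.assoc, ← emb.e₁.po1.w, ← Category.assoc, hd, emb.e₂.match_eq]⟩
end

section
/- Let C be a category with binary coproducts, p₁, p₂ plain rules, and tp : H₁ ⇐_(p₁,m₁) G ⇒_(p₂,m₂) H₂ a parallel independent pair of AC-disregarding transformations with witnesses d₁₂ : L₁ → D₂ (k₂ ∘ d₁₂ = m₁) and d₂₁ : L₂ → D₁ (k₁ ∘ d₂₁ = m₂). Then the coproduct mediating morphism m = [m₁, m₂] : L₁+L₂ → G embeds the transformation pair tp_(L₁+L₂) into tp via extension diagrams; concretely, the induced vertical morphisms [f₁, d₂₁] : I₁+L₂ → D₁ and [m₁*, c₁ ∘ d₂₁] : R₁+L₂ → H₁ (and symmetrically [d₁₂, f₂] : L₁+I₂ → D₂ and [c₂ ∘ d₁₂, m₂*] : L₁+R₂ → H₂) make all the required squares pushouts. -/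
open CategoryTheory CategoryTheory.Limits

universe v u

variable {C : Type u} [Category.{v} C]

section Coproducts

variable [HasBinaryCoproducts C]

lemma isPushout_coprod_left {A B X : C} (g : A ⟶ B) :
    IsPushout g (coprod.inl : A ⟶ A ⨿ X) (coprod.inl : B ⟶ B ⨿ X)
      (coprod.map g (𝟙 X)) := by
  have w : CommSq g (coprod.inl : A ⟶ A ⨿ X) (coprod.inl : B ⟶ B ⨿ X)
      (coprod.map g (𝟙 X)) := ⟨by simp⟩
  refine IsPushout.of_isColimit' w ?_
  exact PushoutCocone.IsColimit.mk w.w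
    (fun s => coprod.desc s.inl (coprod.inr ≫ s.inr))
    (fun s => by exact coprod.inl_desc _ _)
    (fun s => by
      apply coprod.hom_ext
      · erw [coprod.inl_map_assoc, coprod.inl_desc]; exact s.condition
      · erw [coprod.inr_map_assoc, Category.id_comp, coprod.inr_desc])
    (fun s mm h1 h2 => by
      apply coprod.hom_ext
      · erw [coprod.inl_desc]; exact h1
      · have := coprod.inr ≫= h2
        erw [coprod.inr_desc]; simpa using this)

lemma isPushout_coprod_right {A B X : C} (g : A ⟶ B) :
    IsPushout g (coprod.inr : A ⟶ X ⨿ A) (coprod.inr : B ⟶ X ⨿ B)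
      (coprod.map (𝟙 X) g) := by
  have w : CommSq g (coprod.inr : A ⟶ X ⨿ A) (coprod.inr : B ⟶ X ⨿ B)
      (coprod.map (𝟙 X) g) := ⟨by simp⟩
  refine IsPushout.of_isColimit' w ?_
  exact PushoutCocone.IsColimit.mk w.w
    (fun s => coprod.desc (coprod.inl ≫ s.inr) s.inl)
    (fun s => by exact coprod.inr_desc _ _)
    (fun s => by
      apply coprod.hom_ext
      · erw [coprod.inl_map_assoc, Category.id_comp, coprod.inl_desc]
      · erw [coprod.inr_map_assoc, coprod.inr_desc]; exact s.condition)
    (fun s mm h1 h2 => by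
      apply coprod.hom_ext
      · have := coprod.inl ≫= h2
        erw [coprod.inl_desc]; simpa using this
      · erw [coprod.inr_desc]; exact h1)

/-- The transformation applying `p` at the coproduct injection `inl : L ⟶ L ⨿ X`. -/
noncomputable def coprodTrafoL (p : PlainRule C) (X : C) : Trafo p (p.L ⨿ X) (p.R ⨿ X) where
  m := coprod.inl
  D := p.I ⨿ X
  f := coprod.inl
  k := coprod.map p.l (𝟙 X)
  c := coprod.map p.r (𝟙 X)
  cm := coprod.inl
  po1 := isPushout_coprod_left p.l
  po2 := isPushout_coprod_left p.r

/-- The transformation applying `p` at the coproduct injection `inr : L ⟶ X ⨿ L`. -/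
noncomputable def coprodTrafoR (p : PlainRule C) (X : C) : Trafo p (X ⨿ p.L) (X ⨿ p.R) where
  m := coprod.inr
  D := X ⨿ p.I
  f := coprod.inr
  k := coprod.map (𝟙 X) p.l
  c := coprod.map (𝟙 X) p.r
  cm := coprod.inr
  po1 := isPushout_coprod_right p.l
  po2 := isPushout_coprod_right p.r

/-- The transformation pair `tp_(L₁+L₂) : R₁+L₂ ⇐_(p₁,i₁) L₁+L₂ ⇒_(p₂,i₂) L₁+R₂`. -/
noncomputable def coprodPair (p₁ p₂ : PlainRule C) : TrafoPair p₁ p₂ where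
  H₁ := p₁.R ⨿ p₂.L
  G := p₁.L ⨿ p₂.L
  H₂ := p₁.L ⨿ p₂.R
  t₁ := coprodTrafoL p₁ p₂.L
  t₂ := coprodTrafoR p₂ p₁.L

end Coproducts

/- Stacking the coproduct pushout square of `l` (`isPushout_coprod_left`) on top of this square
gives `po`, so this square is a pushout by the pasting lemma. -/
lemma CategoryTheory.IsPushout.coprod_map_desc_left {C : Type u} [Category.{v} C] [HasBinaryCoproducts C]
    {I L D G X : C} {l : I ⟶ L} {f : I ⟶ D} {m : L ⟶ G} {k : D ⟶ G}
    (po : IsPushout l f m k) (d : X ⟶ D) :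
    IsPushout (coprod.map l (𝟙 X)) (coprod.desc f d) (coprod.desc m (d ≫ k)) k :=
  IsPushout.of_top (by rwa [coprod.inl_desc, coprod.inl_desc]) (by ext <;> simp [po.w])
    (isPushout_coprod_left l)

lemma CategoryTheory.IsPushout.coprod_map_desc_right {C : Type u} [Category.{v} C] [HasBinaryCoproducts C]
    {I L D G X : C} {l : I ⟶ L} {f : I ⟶ D} {m : L ⟶ G} {k : D ⟶ G}
    (po : IsPushout l f m k) (d : X ⟶ D) :
    IsPushout (coprod.map (𝟙 X) l) (coprod.desc d f) (coprod.desc (d ≫ k) m) k :=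
  IsPushout.of_top (by rwa [coprod.inr_desc, coprod.inr_desc]) (by ext <;> simp [po.w])
    (isPushout_coprod_right l)

/-- Lemma (extensions of the coproduct transformation pair): for a parallel independent
pair `tp` with witnesses `d₁₂`, `d₂₁`, the coproduct mediating morphism
`[m₁, m₂] : L₁+L₂ ⟶ G` embeds `tp_(L₁+L₂)` into `tp` via extension diagrams; concretely,
the induced vertical morphisms `[f₁, d₂₁]`, `[m₁*, c₁ ∘ d₂₁]`, `[d₁₂, f₂]` and
`[c₂ ∘ d₁₂, m₂*]` make all the required squares pushouts. -/
theorem coprod_mediating_embeds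
    {C : Type u} [Category.{v} C] [HasBinaryCoproducts C] {p₁ p₂ : PlainRule C}
    (tp : TrafoPair p₁ p₂)
    (d₁₂ : p₁.L ⟶ tp.t₂.D) (h₁₂ : d₁₂ ≫ tp.t₂.k = tp.t₁.m)
    (d₂₁ : p₂.L ⟶ tp.t₁.D) (h₂₁ : d₂₁ ≫ tp.t₁.k = tp.t₂.m) :
    (coprod.inl ≫ coprod.desc tp.t₁.m tp.t₂.m = tp.t₁.m) ∧
    (coprod.inr ≫ coprod.desc tp.t₁.m tp.t₂.m = tp.t₂.m) ∧
    (coprod.inl ≫ coprod.desc tp.t₁.f d₂₁ = tp.t₁.f) ∧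
    (coprod.inr ≫ coprod.desc d₁₂ tp.t₂.f = tp.t₂.f) ∧
    IsPushout (coprod.map p₁.l (𝟙 p₂.L)) (coprod.desc tp.t₁.f d₂₁)
      (coprod.desc tp.t₁.m tp.t₂.m) tp.t₁.k ∧
    IsPushout (coprod.map p₁.r (𝟙 p₂.L)) (coprod.desc tp.t₁.f d₂₁)
      (coprod.desc tp.t₁.cm (d₂₁ ≫ tp.t₁.c)) tp.t₁.c ∧
    IsPushout (coprod.map (𝟙 p₁.L) p₂.l) (coprod.desc d₁₂ tp.t₂.f)
      (coprod.desc tp.t₁.m tp.t₂.m) tp.t₂.k ∧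
    IsPushout (coprod.map (𝟙 p₁.L) p₂.r) (coprod.desc d₁₂ tp.t₂.f)
      (coprod.desc (d₁₂ ≫ tp.t₂.c) tp.t₂.cm) tp.t₂.c := by
  refine ⟨coprod.inl_desc _ _, coprod.inr_desc _ _, coprod.inl_desc _ _, coprod.inr_desc _ _,
    ?_, ?_, ?_, ?_⟩
  · rw [← h₂₁]; exact tp.t₁.po1.coprod_map_desc_left d₂₁
  · exact tp.t₁.po2.coprod_map_desc_left d₂₁
  · rw [← h₁₂]; exact tp.t₂.po1.coprod_map_desc_right d₁₂
  · exact tp.t₂.po2.coprod_map_desc_right d₁₂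
end

section
/- Let C be a category and p₁, p₂ plain rules such that every conflicting (parallel dependent) pair of AC-disregarding transformations via (p₁, p₂) has an initial transformation pair. Let S be a set containing exactly one representative of each isomorphism class of initial conflicts for (p₁, p₂). Then S is minimally complete with respect to parallel dependence: S is complete (every conflicting transformation pair via (p₁, p₂) admits an embedding of some member of S via an extension morphism and extension diagrams), and there is no set S' of conflicting transformation pairs for (p₁, p₂) of cardinality strictly smaller than that of S which is complete with respect to parallel dependence. -/
open CategoryTheory CategoryTheory.Limits

universe v u

variable {C : Type u} [Category.{v} C]

/-- An initial conflict for plain rules: a conflicting transformation pair that is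
isomorphic to its own initial transformation pair. -/
def IsInitialConflictPlain {p₁ p₂ : PlainRule C} (tp : TrafoPair p₁ p₂) : Prop :=
  tp.InConflict ∧ ∃ tpI : TrafoPair p₁ p₂, IsInitialTrafoPairFor tpI tp ∧ PairIso tp tpI

/-- A set of transformation pairs is complete w.r.t. parallel dependence if every
conflicting transformation pair admits an embedding of some member of the set via an
extension morphism and extension diagrams. -/
def CompleteForConflicts {p₁ p₂ : PlainRule C} (S : Set (TrafoPair p₁ p₂)) : Prop :=
  ∀ tp : TrafoPair p₁ p₂, tp.InConflict →
    ∃ tpS ∈ S, ∃ m : tpS.G ⟶ tp.G, Nonempty (PairEmbedding tpS tp m)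

section Aux

variable {p₁ p₂ : PlainRule C}

/-- Identity extension diagram. -/
def TrafoEmbedding.refl {p : PlainRule C} {G H : C} (t : Trafo p G H) :
    TrafoEmbedding t t (𝟙 G) where
  d := 𝟙 t.D
  h := 𝟙 H
  match_eq := Category.comp_id _
  f_eq := Category.comp_id _
  po1 := IsPushout.of_vert_isIso ⟨by simp⟩
  po2 := IsPushout.of_vert_isIso ⟨by simp⟩

/-- Composition of extension diagrams. -/
def TrafoEmbedding.comp {p : PlainRule C} {G₁ H₁ G₂ H₂ G₃ H₃ : C}
    {t₁ : Trafo p G₁ H₁} {t₂ : Trafo p G₂ H₂} {t₃ : Trafo p G₃ H₃}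
    {e₁ : G₁ ⟶ G₂} {e₂ : G₂ ⟶ G₃}
    (E₁ : TrafoEmbedding t₁ t₂ e₁) (E₂ : TrafoEmbedding t₂ t₃ e₂) :
    TrafoEmbedding t₁ t₃ (e₁ ≫ e₂) where
  d := E₁.d ≫ E₂.d
  h := E₁.h ≫ E₂.h
  match_eq := by rw [← Category.assoc, E₁.match_eq, E₂.match_eq]
  f_eq := by rw [← Category.assoc, E₁.f_eq, E₂.f_eq]
  po1 := E₁.po1.paste_vert E₂.po1
  po2 := E₁.po2.paste_vert E₂.po2

/-- Identity pair embedding. -/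
def PairEmbedding.refl (tp : TrafoPair p₁ p₂) : PairEmbedding tp tp (𝟙 tp.G) where
  e₁ := TrafoEmbedding.refl tp.t₁
  e₂ := TrafoEmbedding.refl tp.t₂

/-- Composition of pair embeddings. -/
def PairEmbedding.comp {tp₁ tp₂ tp₃ : TrafoPair p₁ p₂}
    {e₁ : tp₁.G ⟶ tp₂.G} {e₂ : tp₂.G ⟶ tp₃.G}
    (E₁ : PairEmbedding tp₁ tp₂ e₁) (E₂ : PairEmbedding tp₂ tp₃ e₂) :
    PairEmbedding tp₁ tp₃ (e₁ ≫ e₂) where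
  e₁ := E₁.e₁.comp E₂.e₁
  e₂ := E₁.e₂.comp E₂.e₂

/-- Parallel independence propagates along pair embeddings. -/
lemma indep_of_embedded {tp' tp : TrafoPair p₁ p₂} {f : tp'.G ⟶ tp.G}
    (E : PairEmbedding tp' tp f) (h : tp'.ParallelIndep) : tp.ParallelIndep := by
  obtain ⟨⟨d₁₂, h₁₂⟩, ⟨d₂₁, h₂₁⟩⟩ := h
  constructor
  · refine ⟨d₁₂ ≫ E.e₂.d, ?_⟩
    rw [Category.assoc, ← E.e₂.po1.w, ← Category.assoc, h₁₂, E.e₁.match_eq]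
  · refine ⟨d₂₁ ≫ E.e₁.d, ?_⟩
    rw [Category.assoc, ← E.e₁.po1.w, ← Category.assoc, h₂₁, E.e₂.match_eq]

/-- Conflict pulls back along pair embeddings. -/
lemma conflict_of_embedded {tp' tp : TrafoPair p₁ p₂} {f : tp'.G ⟶ tp.G}
    (E : PairEmbedding tp' tp f) (h : tp.InConflict) : tp'.InConflict :=
  fun hi => h (indep_of_embedded E hi)

/-- An initial transformation pair is an initial transformation pair for itself. -/
lemma initial_self {tpI tp : TrafoPair p₁ p₂}
    (hI : IsInitialTrafoPairFor tpI tp) : IsInitialTrafoPairFor tpI tpI := by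
  obtain ⟨fI, ⟨EI⟩, U⟩ := hI
  have uniqSelf : ∀ h : tpI.G ⟶ tpI.G, Nonempty (PairEmbedding tpI tpI h) →
      h ≫ fI = fI → h = 𝟙 tpI.G := by
    intro h hne heq
    obtain ⟨g, _, hu⟩ := U tpI fI EI
    rw [hu h ⟨hne, heq⟩, hu (𝟙 tpI.G) ⟨⟨PairEmbedding.refl tpI⟩, Category.id_comp _⟩]
  refine ⟨𝟙 tpI.G, ⟨PairEmbedding.refl tpI⟩, ?_⟩
  intro tp' f' E'
  obtain ⟨g, ⟨⟨Eg⟩, hgf⟩, hu⟩ := U tp' (f' ≫ fI) (E'.comp EI)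
  refine ⟨g, ⟨⟨Eg⟩, ?_⟩, ?_⟩
  · exact uniqSelf (g ≫ f') ⟨Eg.comp E'⟩ (by rw [Category.assoc, hgf])
  · rintro g' ⟨⟨Eg'⟩, hg'⟩
    exact hu g' ⟨⟨Eg'⟩, by rw [← Category.assoc, hg', Category.id_comp]⟩

/-- If both composites of `a` and `b` are isomorphisms, so is `a`. -/
lemma isIso_of_comps {X Y : C} {a : X ⟶ Y} {b : Y ⟶ X}
    (h1 : IsIso (a ≫ b)) (h2 : IsIso (b ≫ a)) : IsIso a := by
  have key : (b ≫ inv (a ≫ b)) ≫ a = 𝟙 Y := by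
    calc (b ≫ inv (a ≫ b)) ≫ a
        = (inv (b ≫ a) ≫ (b ≫ a)) ≫ (b ≫ inv (a ≫ b)) ≫ a := by
          rw [IsIso.inv_hom_id, Category.id_comp]
      _ = inv (b ≫ a) ≫ b ≫ ((a ≫ b) ≫ inv (a ≫ b)) ≫ a := by
          simp only [Category.assoc]
      _ = inv (b ≫ a) ≫ (b ≫ a) := by rw [IsIso.hom_inv_id, Category.id_comp]
      _ = 𝟙 Y := IsIso.inv_hom_id _
  exact ⟨b ≫ inv (a ≫ b), by rw [← Category.assoc]; simp, key⟩

/-- Every self-embedding morphism of an initial conflict is an isomorphism. -/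
lemma selfEmb_isIso {tp : TrafoPair p₁ p₂} (htp : IsInitialConflictPlain tp) :
    ∀ s : tp.G ⟶ tp.G, Nonempty (PairEmbedding tp tp s) → IsIso s := by
  obtain ⟨-, tpI, ⟨fI, ⟨EI⟩, U⟩, ⟨e, he_iso, ⟨Ee⟩⟩, -⟩ := htp
  -- the unique self-map of tpI compatible with fI is the identity
  have uniqSelf : ∀ h : tpI.G ⟶ tpI.G, Nonempty (PairEmbedding tpI tpI h) →
      h ≫ fI = fI → h = 𝟙 tpI.G := by
    intro h hne heq
    obtain ⟨g, _, hu⟩ := U tpI fI EI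
    rw [hu h ⟨hne, heq⟩, hu (𝟙 tpI.G) ⟨⟨PairEmbedding.refl tpI⟩, Category.id_comp _⟩]
  -- every self-embedding of tpI has a left inverse which is a self-embedding
  have leftInv : ∀ s : tpI.G ⟶ tpI.G, Nonempty (PairEmbedding tpI tpI s) →
      ∃ g : tpI.G ⟶ tpI.G, Nonempty (PairEmbedding tpI tpI g) ∧ g ≫ s = 𝟙 tpI.G := by
    rintro s ⟨Es⟩
    obtain ⟨g, ⟨⟨Eg⟩, hg⟩, -⟩ := U tpI (s ≫ fI) (Es.comp EI)
    refine ⟨g, ⟨Eg⟩, ?_⟩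
    exact uniqSelf (g ≫ s) ⟨Eg.comp Es⟩ (by rw [Category.assoc, hg])
  -- hence every self-embedding of tpI is an isomorphism
  have selfI : ∀ s : tpI.G ⟶ tpI.G, Nonempty (PairEmbedding tpI tpI s) → IsIso s := by
    intro s hs
    obtain ⟨g, hg_ne, hgs⟩ := leftInv s hs
    obtain ⟨g', _, hg'g⟩ := leftInv g hg_ne
    have hsg : s ≫ g = 𝟙 tpI.G := by
      have : g' = s := by
        calc g' = g' ≫ (g ≫ s) := by rw [hgs, Category.comp_id]
        _ = (g' ≫ g) ≫ s := by rw [Category.assoc]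
        _ = s := by rw [hg'g, Category.id_comp]
      rw [← this]; exact hg'g
    exact ⟨g, hsg, hgs⟩
  -- fI is an isomorphism
  have hfI : IsIso fI := by
    have h₀ : IsIso (fI ≫ e) := selfI _ ⟨EI.comp Ee⟩
    exact @IsIso.of_isIso_comp_right _ _ _ _ _ fI e he_iso h₀
  -- every embedding morphism tpI ⟶ tp is an isomorphism
  have embIso : ∀ h : tpI.G ⟶ tp.G, Nonempty (PairEmbedding tpI tp h) → IsIso h := by
    rintro h ⟨Eh⟩
    obtain ⟨g, ⟨hg_ne, hgh⟩, -⟩ := U tpI h Eh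
    have : IsIso g := selfI g hg_ne
    rw [← hgh] at hfI
    exact @IsIso.of_isIso_comp_left _ _ _ _ _ g h this hfI
  -- conclude for self-embeddings of tp
  rintro s ⟨Es⟩
  have : IsIso (fI ≫ s) := embIso _ ⟨EI.comp Es⟩
  exact @IsIso.of_isIso_comp_left _ _ _ _ _ fI s hfI this

/-- If a transformation pair embeds into two initial conflicts, they are isomorphic. -/
lemma pairIso_of_common {tp tq tp' : TrafoPair p₁ p₂}
    (htp : IsInitialConflictPlain tp) (htq : IsInitialConflictPlain tq)
    {fp : tp'.G ⟶ tp.G} (Ep : PairEmbedding tp' tp fp)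
    {fq : tp'.G ⟶ tq.G} (Eq : PairEmbedding tp' tq fq) : PairIso tp tq := by
  obtain ⟨tpI, ⟨fIp, ⟨EIp⟩, Up⟩, ⟨ep, hep_iso, ⟨Eep⟩⟩, -⟩ := htp.2
  obtain ⟨tqI, ⟨fIq, ⟨EIq⟩, Uq⟩, ⟨eq', heq_iso, ⟨Eeq⟩⟩, -⟩ := htq.2
  obtain ⟨gp, ⟨⟨Egp⟩, -⟩, -⟩ := Up tp' fp Ep
  obtain ⟨gq, ⟨⟨Egq⟩, -⟩, -⟩ := Uq tp' fq Eq
  -- a : tp ⟶ tq, b : tq ⟶ tp, both embedding morphisms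
  set a : tp.G ⟶ tq.G := ep ≫ gp ≫ fq with ha
  set b : tq.G ⟶ tp.G := eq' ≫ gq ≫ fp with hb
  have Ea : PairEmbedding tp tq a := Eep.comp (Egp.comp Eq)
  have Eb : PairEmbedding tq tp b := Eeq.comp (Egq.comp Ep)
  have hab : IsIso (a ≫ b) := selfEmb_isIso htp _ ⟨Ea.comp Eb⟩
  have hba : IsIso (b ≫ a) := selfEmb_isIso htq _ ⟨Eb.comp Ea⟩
  exact ⟨⟨a, isIso_of_comps hab hba, ⟨Ea⟩⟩, ⟨b, isIso_of_comps hba hab, ⟨Eb⟩⟩⟩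

end Aux

/-- Minimal completeness of initial conflicts for plain rules: a set `S` of
representatives (one per isomorphism class) of the initial conflicts is complete
w.r.t. parallel dependence, and no set of conflicting transformation pairs of
strictly smaller cardinality is complete w.r.t. parallel dependence. -/
theorem initialConflicts_minimally_complete
    {C : Type u} [Category.{v} C] {p₁ p₂ : PlainRule C}
    (hinit : ∀ tp : TrafoPair p₁ p₂, tp.InConflict →
      ∃ tpI : TrafoPair p₁ p₂, IsInitialTrafoPairFor tpI tp)
    (S : Set (TrafoPair p₁ p₂))
    (hS₁ : ∀ tp ∈ S, IsInitialConflictPlain tp)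
    (hS₂ : ∀ tp : TrafoPair p₁ p₂, IsInitialConflictPlain tp → ∃ tp' ∈ S, PairIso tp tp')
    (hS₃ : ∀ tp ∈ S, ∀ tp' ∈ S, PairIso tp tp' → tp = tp') :
    CompleteForConflicts S ∧
    ¬ ∃ S' : Set (TrafoPair p₁ p₂), (∀ tp ∈ S', tp.InConflict) ∧
        CompleteForConflicts S' ∧ Cardinal.mk S' < Cardinal.mk S := by
  constructor
  · -- completeness
    intro tp hc
    obtain ⟨tpI, hI⟩ := hinit tp hc
    obtain ⟨fI, ⟨EI⟩, U⟩ := hI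
    have hIc : tpI.InConflict := conflict_of_embedded EI hc
    have hinitconf : IsInitialConflictPlain tpI :=
      ⟨hIc, tpI, initial_self ⟨fI, ⟨EI⟩, U⟩,
        ⟨𝟙 _, inferInstance, ⟨PairEmbedding.refl tpI⟩⟩,
        ⟨𝟙 _, inferInstance, ⟨PairEmbedding.refl tpI⟩⟩⟩
    obtain ⟨tpS, hmem, -, ⟨e', -, ⟨E'⟩⟩⟩ := hS₂ tpI hinitconf
    exact ⟨tpS, hmem, e' ≫ fI, ⟨E'.comp EI⟩⟩
  · -- minimality
    rintro ⟨S', hconf, hcomp, hcard⟩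
    have hchoice : ∀ x : S, ∃ y : S', ∃ mm : (y : TrafoPair p₁ p₂).G ⟶
        (x : TrafoPair p₁ p₂).G, Nonempty (PairEmbedding y.1 x.1 mm) := by
      intro x
      obtain ⟨tpS, hmem, mm, hmm⟩ := hcomp x.1 (hS₁ x.1 x.2).1
      exact ⟨⟨tpS, hmem⟩, mm, hmm⟩
    choose F mF hF using hchoice
    have hinj : Function.Injective F := by
      intro x₁ x₂ hFeq
      apply Subtype.ext
      apply hS₃ x₁.1 x₁.2 x₂.1 x₂.2
      obtain ⟨m₂, ⟨E₂⟩⟩ : ∃ m₂ : (F x₁).1.G ⟶ x₂.1.G,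
          Nonempty (PairEmbedding (F x₁).1 x₂.1 m₂) := by
        rw [hFeq]; exact ⟨mF x₂, hF x₂⟩
      exact pairIso_of_common (hS₁ x₁.1 x₁.2) (hS₁ x₂.1 x₂.2) (hF x₁).some E₂
    exact absurd (Cardinal.mk_le_of_injective hinj) (not_le.2 hcard)
end

section
/- There is no finite family H₁, …, Hₙ of simple graphs (n a natural number) such that for every simple graph G the following equivalence holds: G has no edges if and only if there exist an index i and a graph embedding of Hᵢ into G. -/
/-!
Having an embedded copy of some `Hᵢ` is preserved when a disjoint component is added to `G`,
whereas having no edges is not. Since the edgeless one-vertex graph contains some `Hᵢ`, so does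
that graph plus a disjoint edge, which is not edgeless.
-/

universe u

namespace SimpleGraph

variable {ι : Type*} {V : ι → Type*} (H : ∀ i, SimpleGraph (V i))

theorem exists_embedding_sum_left {W W' : Type*} {G : SimpleGraph W} (K : SimpleGraph W')
    (h : ∃ i, Nonempty (H i ↪g G)) : ∃ i, Nonempty (H i ↪g G ⊕g K) :=
  let ⟨i, ⟨f⟩⟩ := h
  ⟨i, ⟨Embedding.sumInl.comp f⟩⟩

theorem not_forall_edgeless_iff_exists_embedding :
    ¬ ∀ (W : Type u) (G : SimpleGraph W),
        (∀ v w : W, ¬ G.Adj v w) ↔ ∃ i, Nonempty (H i ↪g G) := by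
  intro hchar
  let G₀ : SimpleGraph PUnit.{u + 1} := ⊥
  let G₁ := G₀ ⊕g (⊤ : SimpleGraph (ULift.{u} Bool))
  have hG₀ : ∃ i, Nonempty (H i ↪g G₀) := (hchar _ G₀).mp fun _ _ => id
  have hG₁ : ∀ v w, ¬ G₁.Adj v w := (hchar _ G₁).mpr (exists_embedding_sum_left H _ hG₀)
  exact hG₁ (.inr (.up true)) (.inr (.up false)) (by simp [G₁])

end SimpleGraph

/-- There is no finite family `H₁, …, Hₙ` of simple graphs such that for every simple
graph `G`: `G` has no edges if and only if some `Hᵢ` admits a graph embedding into `G`. -/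
theorem no_finite_family_characterizes_edgeless :
    ¬ ∃ (n : ℕ) (V : Fin n → Type) (H : ∀ i : Fin n, SimpleGraph (V i)),
        ∀ (W : Type) (G : SimpleGraph W),
          (∀ v w : W, ¬ G.Adj v w) ↔ ∃ i : Fin n, Nonempty ((H i) ↪g G) := by
  rintro ⟨n, V, H, hchar⟩
  exact SimpleGraph.not_forall_edgeless_iff_exists_embedding H hchar
end
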